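/- Let h be a flat Riemannian metric on the two-torus 𝕋² with diameter Γ ≤ 1, let I ⊂ ℝ be a compact interval with |I| ≥ 1, let X = 𝕋²×I carry the distance d_X induced by the flat product Riemannian metric g = dx² + h, and let Y = (I,|·|) with the standard distance. Then dist_GH(X,Y) ≥ Γ/5. -/

import Mathlib

noncomputable section

open Metric Set Filter Topology
open scoped ENNReal NNReal

/-! ### Basic model spaces -/

/-- Euclidean three-space. -/
abbrev R3 := EuclideanSpace ℝ (Fin 3)
/-- Euclidean two-space. -/
abbrev R2 := EuclideanSpace ℝ (Fin 2)
/-- The two-torus `𝕋² = 𝕊¹ × 𝕊¹`. -/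
abbrev Torus2 := Circle × Circle
/-- The closed unit two-disc. -/
abbrev Disc2 := {z : ℂ // ‖z‖ ≤ 1}
/-- The (closed) solid torus `B̄² × 𝕊¹`. -/
abbrev SolidTorusT := Disc2 × Circle
/-- The closed unit three-ball. -/
abbrev Ball3 := {x : R3 // ‖x‖ ≤ 1}
/-- The unit two-sphere. -/
abbrev Sphere2 := {x : R3 // ‖x‖ = 1}

/-! ### Abstract Riemannian data

Mathlib has no Ricci curvature or Riemannian volume, so we record abstractly,
for a Riemannian metric `g` on `M`: the induced length distance `d`, the
Riemannian volume `vol` of subsets, and at each point the smallest and largest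
eigenvalues `ricciLo`, `ricciHi` of the Ricci tensor (w.r.t. `g`). -/
structure RiemData (M : Type*) where
  d : M → M → ℝ
  d_self : ∀ p, d p p = 0
  d_comm : ∀ p q, d p q = d q p
  d_triangle : ∀ p q r, d p r ≤ d p q + d q r
  d_eq_zero : ∀ p q, d p q = 0 → p = q
  vol : Set M → ℝ
  vol_nonneg : ∀ s, 0 ≤ vol s
  vol_mono : ∀ s t, s ⊆ t → vol s ≤ vol t
  ricciLo : M → ℝ
  ricciHi : M → ℝ
  lo_le_hi : ∀ p, ricciLo p ≤ ricciHi p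

namespace RiemData

variable {M : Type*} (g : RiemData M)

/-- Geodesic ball of the metric. -/
def ball (o : M) (r : ℝ) : Set M := {p | g.d o p < r}

/-- Open geodesic annulus `A_g(a,b) = B_g(o,b) ∖ closure (B_g(o,a))`. -/
def ann (o : M) (a b : ℝ) : Set M := {p | a < g.d o p ∧ g.d o p < b}

/-- Metric completeness of the distance `d` (every Cauchy sequence converges). -/
def Complete : Prop :=
  ∀ s : ℕ → M, (∀ ε > 0, ∃ N, ∀ m ≥ N, ∀ n ≥ N, g.d (s m) (s n) < ε) →
    ∃ p, ∀ ε > 0, ∃ N, ∀ n ≥ N, g.d (s n) p < ε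

/-- `d` is a length (intrinsic) distance: approximate midpoints exist. -/
def LengthDist : Prop :=
  ∀ p q, ∀ ε > 0, ∃ m, g.d p m ≤ g.d p q / 2 + ε ∧ g.d m q ≤ g.d p q / 2 + ε

end RiemData

/-- For a Riemannian metric on `ℝ³`: the topology induced by the Riemannian
distance is the standard topology of `ℝ³`. -/
def RiemData.Compatible (g : RiemData R3) : Prop :=
  (∀ p : R3, ∀ ε > 0, ∃ δ > 0, ∀ q, ‖q - p‖ < δ → g.d p q < ε) ∧
  (∀ p : R3, ∀ ε > 0, ∃ δ > 0, ∀ q, g.d p q < δ → ‖q - p‖ < ε)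

/-! ### Gromov–Hausdorff distance, following the definition in the paper:
metrics on the disjoint union extending both metrics, with each space in the
`δ`-neighbourhood of the other. -/

/-- There is a metric on `X ⊔ Y` extending the two distances for which `X` and
`Y` are mutually within (closed) distance `δ`; `dist_GH (X,Y) ≤ δ'` for every
`δ' > δ`. -/
def IsGHApprox (X : Type*) (Y : Type*) [PseudoMetricSpace X] [PseudoMetricSpace Y]
    (δ : ℝ) : Prop :=
  ∃ D : (X ⊕ Y) → (X ⊕ Y) → ℝ,
    (∀ a, D a a = 0) ∧ (∀ a b, 0 ≤ D a b) ∧ (∀ a b, D a b = D b a) ∧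
    (∀ a b c, D a c ≤ D a b + D b c) ∧
    (∀ x x' : X, D (.inl x) (.inl x') = dist x x') ∧
    (∀ y y' : Y, D (.inr y) (.inr y') = dist y y') ∧
    (∀ x : X, ∃ y : Y, D (.inl x) (.inr y) ≤ δ) ∧
    (∀ y : Y, ∃ x : X, D (.inl x) (.inr y) ≤ δ)

/-- The Gromov–Hausdorff distance between `X` and `Y` is at most `c`. -/
def GHDistLE (X : Type*) (Y : Type*) [PseudoMetricSpace X] [PseudoMetricSpace Y]
    (c : ℝ) : Prop :=
  ∀ δ, c < δ → IsGHApprox X Y δ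

/-- The Gromov–Hausdorff distance between `X` and `Y` is at least `c`. -/
def GHDistGE (X : Type*) (Y : Type*) [PseudoMetricSpace X] [PseudoMetricSpace Y]
    (c : ℝ) : Prop :=
  ∀ δ, IsGHApprox X Y δ → c ≤ δ

/-- A compact interval `[0,l]` of the real line with the standard distance. -/
abbrev IccSp (l : ℝ) := Set.Icc (0:ℝ) l

/-! ### Intrinsic distance, radius, curve lengths -/

/-- Length of a path, as the total variation of the parametrization. -/
def pathLength {X : Type*} [PseudoMetricSpace X] {p q : X} (γ : Path p q) : ℝ≥0∞ :=
  eVariationOn γ Set.univ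

/-- Intrinsic (inner) distance of the region `Ω ⊆ X`: infimum of lengths of
paths joining `p` to `q` inside `Ω`. -/
def intrinsicDist {X : Type*} [MetricSpace X] (Ω : Set X) (p q : X) : ℝ≥0∞ :=
  ⨅ (γ : Path p q) (_ : Set.range γ ⊆ Ω), pathLength γ

/-- The radius (to the boundary) `rad(Ω) = sup_{p ∈ Ω} d^Ω(p, ∂Ω)`. -/
def radius {X : Type*} [MetricSpace X] (Ω : Set X) : ℝ≥0∞ :=
  ⨆ (p : X) (_ : p ∈ Ω), ⨅ (q : X) (_ : q ∈ frontier Ω), intrinsicDist Ω p q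

/-! ### Flat tori -/

/-- `T` is (isometric to) a flat two-torus: a quotient of Euclidean `ℝ²` by a
lattice spanned by two independent vectors, with the quotient distance. -/
def IsFlatTorus (T : Type*) [MetricSpace T] : Prop :=
  ∃ v₁ v₂ : R2, LinearIndependent ℝ ![v₁, v₂] ∧
    ∃ π : R2 → T, Function.Surjective π ∧
      ∀ x y : R2, dist (π x) (π y) =
        Metric.infDist (x - y) ((AddSubgroup.closure {v₁, v₂} : AddSubgroup R2) : Set R2)

/-! ### Manifolds with (non-necessarily smooth) boundary, as metric spaces

An abstract compact Riemannian three-manifold with non-necessarily smooth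
boundary is recorded as a metric space (the distance `d^M_g`), a distinguished
boundary set, the total Riemannian volume, and pointwise Ricci eigenvalue
bounds. -/
structure RMB where
  X : Type
  [ms : MetricSpace X]
  bdry : Set X
  vol : ℝ
  ricciLo : X → ℝ
  ricciHi : X → ℝ

attribute [instance] RMB.ms

namespace RMB

variable (M : RMB)

/-- The manifold interior `M° = M ∖ ∂M`. -/
def interiorPts : Set M.X := M.bdryᶜ

/-- The tubular neighbourhood `𝒯_d(∂M, ε)` of the boundary. -/
def tnb (ε : ℝ) : Set M.X := {p | Metric.infDist p M.bdry < ε}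

/-- `|Ric| ≤ Λ` everywhere. -/
def RicBddBy (Λ : ℝ) : Prop := ∀ p : M.X, -Λ ≤ M.ricciLo p ∧ M.ricciHi p ≤ Λ

end RMB

/-- Membership in the class `ℳ(𝔑₀)`: for all `1 > ε₀ > 2ε₁ > 0`, the set
`M ∖ 𝒯(∂M,ε₀)` can be covered by at most `𝔑₀(ε₀,ε₁)` geodesic balls of radius
`ε₁` (balls centred at points at distance `> ε₁` from the boundary). -/
def InClassM (N : ℝ → ℝ → ℝ) (M : RMB) : Prop :=
  ∀ ε₀ ε₁ : ℝ, ε₀ < 1 → 2 * ε₁ < ε₀ → 0 < ε₁ →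
    ∃ s : Finset M.X, (s.card : ℝ) ≤ N ε₀ ε₁ ∧
      (∀ c ∈ s, ε₁ < Metric.infDist c M.bdry) ∧
      ((Set.univ : Set M.X) \ M.tnb ε₀) ⊆ ⋃ c ∈ s, Metric.ball c ε₁

/-- The class `ℳ(𝔑₀,Λ₀)`. -/
def InClassML (N : ℝ → ℝ → ℝ) (Λ : ℝ) (M : RMB) : Prop :=
  InClassM N M ∧ M.RicBddBy Λ

/-- An `(ε̲,ε̄)`-connected component of `M`: a compact connected region with
boundary contained in `𝒯(∂M,ε̄) ∖ closure (𝒯(∂M,ε̲))`. -/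
def IsEpsComponent (M : RMB) (e1 e2 : ℝ) (Ω : Set M.X) : Prop :=
  IsCompact Ω ∧ IsConnected Ω ∧
    frontier Ω ⊆ M.tnb e2 \ closure (M.tnb e1)

/-- A sequence of (pseudo)metric spaces indexed by `ℕ` converges in the
Gromov–Hausdorff topology to `X`. -/
def GHConv (S : ℕ → Type*) [∀ i, PseudoMetricSpace (S i)]
    (X : Type*) [PseudoMetricSpace X] : Prop :=
  ∀ ε : ℝ, 0 < ε → ∃ N, ∀ i ≥ N, IsGHApprox (S i) X ε

/-
A `2δ`-approximation `F : T × [a,b] → [a,b]` turns the columns `{p} × [a,b]` and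
`{q} × [a,b]` into two functions of `t` that stay `dist p q - 2δ` apart but, over short steps,
move by less than twice that, so their difference never changes sign. The column over `p` is
spread over all of `[a,b]`, so at one end of the interval the column over `q` would be pushed
out of `[a,b]` unless `dist p q ≤ 4δ`. Hence `diam T ≤ 4δ`.
-/

theorem pos_iff_pos_of_le_abs_of_abs_sub_lt {E : Type*} [PseudoMetricSpace E]
    [PreconnectedSpace E] {φ : E → ℝ} {m s : ℝ} (hs : 0 < s) (habs : ∀ x, m ≤ |φ x|)
    (hstep : ∀ x y, dist x y < s → |φ x - φ y| < 2 * m) (x y : E) :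
    0 < φ x ↔ 0 < φ y := by
  have hloc : IsLocallyConstant fun z => 0 < φ z := by
    refine (IsLocallyConstant.iff_eventually_eq _).2 fun z => ?_
    filter_upwards [Metric.ball_mem_nhds z hs] with w hw
    have hwz := abs_lt.1 (hstep w z hw)
    rcases le_abs'.1 (habs w) with hw' | hw' <;> rcases le_abs'.1 (habs z) with hz' | hz' <;>
      exact propext ⟨fun h => by linarith, fun h => by linarith⟩
  exact Iff.of_eq (hloc.apply_eq_of_preconnectedSpace x y)

theorem IsGHApprox.nonneg {X Y : Type*} [PseudoMetricSpace X] [PseudoMetricSpace Y]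
    [Nonempty Y] {δ : ℝ} (h : IsGHApprox X Y δ) : 0 ≤ δ := by
  obtain ⟨D, -, hD_nonneg, -, -, -, -, -, hYX⟩ := h
  obtain ⟨x, hx⟩ := hYX (Classical.arbitrary Y)
  exact (hD_nonneg _ _).trans hx

theorem IsGHApprox.exists_abs_dist_sub_dist_le {X Y : Type*} [PseudoMetricSpace X]
    [PseudoMetricSpace Y] {δ : ℝ} (h : IsGHApprox X Y δ) :
    ∃ F : X → Y, ∀ x x', |dist (F x) (F x') - dist x x'| ≤ 2 * δ := by
  obtain ⟨D, -, -, hD_symm, hD_tri, hDX, hDY, hXY, -⟩ := h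
  choose F hF using hXY
  refine ⟨F, fun x x' => abs_le.2 ⟨?_, ?_⟩⟩
  · have := hD_tri (.inl x) (.inr (F x)) (.inl x')
    have := hD_tri (.inr (F x)) (.inr (F x')) (.inl x')
    have := hD_symm (.inr (F x)) (.inl x)
    have := hD_symm (.inr (F x')) (.inl x')
    linarith [hF x, hF x', hDX x x', hDY (F x) (F x')]
  · have := hD_tri (.inr (F x)) (.inl x) (.inr (F x'))
    have := hD_tri (.inl x) (.inl x') (.inr (F x'))
    have := hD_symm (.inr (F x)) (.inl x)
    linarith [hF x, hF x', hDX x x', hDY (F x) (F x')]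

theorem le_four_mul_of_isometry_Icc {X : Type*} [PseudoMetricSpace X] {a b δ r : ℝ}
    (hab : a ≤ b) {F : X → Icc a b} (hF : ∀ x x', |dist (F x) (F x') - dist x x'| ≤ 2 * δ)
    {u v : Icc a b → X} (hu : Isometry u) (hv : Isometry v)
    (huv : ∀ t, r ≤ dist (u t) (v t)) : r ≤ 4 * δ := by
  by_contra! hr
  have : PreconnectedSpace (Icc a b) := Subtype.preconnectedSpace isPreconnected_Icc
  have hdist (x x' : X) : dist (F x) (F x') = |(F x : ℝ) - F x'| := Subtype.dist_eq _ _
  set φ : Icc a b → ℝ := fun t => F (v t) - F (u t)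
  have habs (t : Icc a b) : r - 2 * δ ≤ |φ t| := by
    have := abs_le.1 (hF (v t) (u t))
    rw [hdist, dist_comm] at this
    linarith [huv t]
  have hstep (t t' : Icc a b) (htt' : dist t t' < r - 4 * δ) :
      |φ t - φ t'| < 2 * (r - 2 * δ) := by
    have hu' := abs_le.1 (hF (u t) (u t'))
    have hv' := abs_le.1 (hF (v t) (v t'))
    rw [hdist, hu.dist_eq] at hu'
    rw [hdist, hv.dist_eq] at hv'
    calc |φ t - φ t'| = |((F (v t) : ℝ) - F (v t')) - ((F (u t) : ℝ) - F (u t'))| := by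
          simp only [φ]; ring_nf
      _ ≤ |(F (v t) : ℝ) - F (v t')| + |(F (u t) : ℝ) - F (u t')| := abs_sub _ _
      _ < 2 * (r - 2 * δ) := by linarith
  set ta : Icc a b := ⟨a, le_rfl, hab⟩
  set tb : Icc a b := ⟨b, hab, le_rfl⟩
  have hsign : 0 < φ ta ↔ 0 < φ tb :=
    pos_iff_pos_of_le_abs_of_abs_sub_lt (by linarith) habs hstep ta tb
  -- `u` stretches over `[a,b]`, so its ends are mapped `2δ`-close to opposite ends of `[a,b]`.
  have hspread : b - a - 2 * δ ≤ |(F (u tb) : ℝ) - F (u ta)| := by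
    have := abs_le.1 (hF (u tb) (u ta))
    rw [hdist, hu.dist_eq, Subtype.dist_eq, Real.dist_eq, abs_of_nonneg (sub_nonneg.2 hab)]
      at this
    linarith
  have hφa := le_abs'.1 (habs ta)
  have hφb := le_abs'.1 (habs tb)
  have hFua := (F (u ta)).2; have hFub := (F (u tb)).2
  have hFva := (F (v ta)).2; have hFvb := (F (v tb)).2
  simp only [φ, mem_Icc] at hsign hφa hφb hFua hFub hFva hFvb
  rcases le_abs'.1 hspread with hdown | hup
  · have := hsign.2 (by rcases hφb with h | h <;> linarith)
    rcases hφa with h | h <;> linarith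
  · have := hsign.1 (by rcases hφa with h | h <;> linarith)
    rcases hφb with h | h <;> linarith

theorem ghDist_flat_torus_cylinder_to_interval_ge_general
    (T : Type) [MetricSpace T]
    (Γ : ℝ) (hdiam : Metric.diam (Set.univ : Set T) = Γ)
    (a b : ℝ) (hab : 1 ≤ b - a)
    (X : Type) [MetricSpace X] (e : X ≃ T × (Set.Icc a b))
    (hX : ∀ p q : X, dist p q =
      Real.sqrt (dist (e p).1 (e q).1 ^ 2 +
        |((e p).2 : ℝ) - ((e q).2 : ℝ)| ^ 2)) :
    GHDistGE X (Set.Icc a b) (Γ / 5) := by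
  intro δ hδ
  have hab' : a ≤ b := by linarith
  have : Nonempty (Icc a b) := ⟨⟨a, le_rfl, hab'⟩⟩
  have hδ0 := hδ.nonneg
  obtain ⟨F, hF⟩ := hδ.exists_abs_dist_sub_dist_le
  have hdist (p q : T) (t t' : Icc a b) :
      dist (e.symm (p, t)) (e.symm (q, t')) = √(dist p q ^ 2 + dist t t' ^ 2) := by
    simp [hX, Subtype.dist_eq, Real.dist_eq]
  have hcolumn (p : T) : Isometry fun t => e.symm (p, t) :=
    Isometry.of_dist_eq fun t t' => by simp [hdist]
  have hsep (p q : T) : dist p q ≤ 4 * δ :=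
    le_four_mul_of_isometry_Icc hab' hF (hcolumn p) (hcolumn q) fun t => by simp [hdist]
  have hΓ : Γ ≤ 4 * δ := hdiam ▸ diam_le_of_forall_dist_le (by positivity) fun p _ q _ => hsep p q
  have hΓ0 : 0 ≤ Γ := hdiam ▸ diam_nonneg
  linarith

/-- Let `h` be a flat metric on `𝕋²` of diameter `Γ ≤ 1`,
`I = [a,b]` a compact interval with `|I| ≥ 1`, and let `X = 𝕋² × I` carry the
distance induced by the flat product metric `g = dx² + h`.  Then
`dist_GH(X, I) ≥ Γ/5`. -/
theorem ghDist_flat_torus_cylinder_to_interval_ge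
    (T : Type) [MetricSpace T] [CompactSpace T] [Nonempty T]
    (hT : IsFlatTorus T)
    (Γ : ℝ) (hdiam : Metric.diam (Set.univ : Set T) = Γ) (hΓ : Γ ≤ 1)
    (a b : ℝ) (hab : 1 ≤ b - a)
    (X : Type) [MetricSpace X] (e : X ≃ T × (Set.Icc a b))
    (hX : ∀ p q : X, dist p q =
      Real.sqrt (dist (e p).1 (e q).1 ^ 2 +
        |((e p).2 : ℝ) - ((e q).2 : ℝ)| ^ 2)) :
    GHDistGE X (Set.Icc a b) (Γ / 5) :=
  ghDist_flat_torus_cylinder_to_interval_ge_general T Γ hdiam a b hab X e hX
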